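/- arXiv:0810.0352 — 3 statements merged into one kernel-verified Lean document; each statement's English description precedes it below -/
import Mathlib

section
/- Let n ≥ 3 and let S_n be the monoid presented by generators a_1, …, a_n and relations a_1 a_2 ⋯ a_n = a_{σ(1)} ⋯ a_{σ(n)} for σ in the cyclic group generated by the n-cycle. Then S_n is cancellative: for all x, y, s ∈ S_n, if s·x = s·y then x = y, and if x·s = y·s then x = y. -/
/-- The word `a_{σ(1)} a_{σ(2)} ⋯ a_{σ(n)}` in the free monoid on `n` generators. -/
def permWord (n : ℕ) (σ : Equiv.Perm (Fin n)) : FreeMonoid (Fin n) :=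
  ((List.finRange n).map fun i => FreeMonoid.of (σ i)).prod

/-- The defining relations `a_1 a_2 ⋯ a_n = a_{σ(1)} a_{σ(2)} ⋯ a_{σ(n)}`, where `σ` runs
through the cyclic subgroup of `Sym_n` generated by the `n`-cycle `(1,2,…,n)` (i.e. `finRotate n`). -/
def cycRel (n : ℕ) : FreeMonoid (Fin n) → FreeMonoid (Fin n) → Prop :=
  fun x y => x = permWord n 1 ∧ ∃ k : ℕ, y = permWord n (finRotate n ^ k)

/-- The monoid `S_n` presented by generators `a_1, …, a_n` and the above relations. -/
def Scyc (n : ℕ) : Type := (conGen (cycRel n)).Quotient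

instance (n : ℕ) : Monoid (Scyc n) := Con.monoid _

/-- The generator `a_i` of `S_n`. -/
def agen {n : ℕ} (i : Fin n) : Scyc n := (conGen (cycRel n)).mk' (FreeMonoid.of i)

/-- The element `z = a_1 a_2 ⋯ a_n` of `S_n`. -/
def zc (n : ℕ) : Scyc n := ((List.finRange n).map agen).prod

/-!
In `S_n` every full arc `a_s a_{s+1} ⋯ a_{s+n-1}` (indices mod `n`) equals `z = a_1 ⋯ a_n`,
and `z` is central. So every element is `z^m u` with `u` a word containing no full arc. Reading a
word from the right and pulling out each completed arc as a factor `z` computes such a pair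
`(m, u)`; a full arc read this way just increments `m`, so the procedure is an action of `S_n` on
normal forms. Each generator acts injectively, because the letter last read can be recovered from
the result; this gives left cancellation. Right cancellation follows by the anti-automorphism
`a_i ↦ a_{-i}`, which maps full arcs to full arcs.
-/

namespace Scyc

variable {n : ℕ}

def word (l : List (Fin n)) : Scyc n := (l.map agen).prod

@[simp] lemma word_nil : word ([] : List (Fin n)) = 1 := rfl

@[simp] lemma word_cons (i : Fin n) (l : List (Fin n)) : word (i :: l) = agen i * word l :=
  List.prod_cons

@[simp] lemma word_append (l l' : List (Fin n)) : word (l ++ l') = word l * word l' := by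
  simp [word]

@[elab_as_elim]
lemma induction_on {P : Scyc n → Prop} (x : Scyc n) (one : P 1)
    (agen_mul : ∀ i x, P x → P (agen i * x)) : P x := by
  obtain ⟨w, rfl⟩ := (conGen (cycRel n)).mk'_surjective x
  induction w using FreeMonoid.inductionOn' with
  | one => exact one
  | of_mul i w ih => rw [map_mul]; exact agen_mul i _ ih

instance : Subsingleton (Scyc 0) :=
  ⟨fun x y => by
    rw [induction_on (P := (· = 1)) x rfl fun i => i.elim0,
      induction_on (P := (· = 1)) y rfl fun i => i.elim0]⟩

lemma map_permWord {M : Type*} [Monoid M] (f : FreeMonoid (Fin n) →* M)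
    (σ : Equiv.Perm (Fin n)) :
    f (permWord n σ) = (((List.finRange n).map σ).map fun i => f (FreeMonoid.of i)).prod := by
  rw [permWord, map_list_prod, List.map_map, List.map_map]
  rfl

lemma unop_prod_map_op_agen_neg (l : List (Fin n)) :
    ((l.map fun i => MulOpposite.op (agen (-i))).prod).unop = word (l.map Neg.neg).reverse := by
  rw [MulOpposite.unop_list_prod, List.map_map, word, List.map_reverse, List.map_map]
  rfl

section

open Fin.CommRing

variable [NeZero n]

def arc (s : Fin n) : ℕ → List (Fin n)
  | 0 => []
  | L + 1 => s :: arc (s + 1) L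

@[simp] lemma arc_zero (s : Fin n) : arc s 0 = [] := rfl

@[simp] lemma arc_succ (s : Fin n) (L : ℕ) : arc s (L + 1) = s :: arc (s + 1) L := rfl

@[simp] lemma length_arc (s : Fin n) (L : ℕ) : (arc s L).length = L := by
  induction L generalizing s <;> simp [*]

lemma arc_add (s : Fin n) (a b : ℕ) : arc s (a + b) = arc s a ++ arc (s + (a : Fin n)) b := by
  induction a generalizing s with
  | zero => simp
  | succ a ih =>
    rw [Nat.add_right_comm, arc_succ, ih, arc_succ, List.cons_append]
    push_cast
    ring_nf

lemma arc_prefix_arc (s : Fin n) {a b : ℕ} (h : a ≤ b) : arc s a <+: arc s b := by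
  obtain ⟨c, rfl⟩ := Nat.exists_eq_add_of_le h
  rw [arc_add]
  exact List.prefix_append _ _

lemma arc_eq_cons_append (i : Fin n) : arc i n = i :: arc (i + 1) (n - 1) := by
  obtain ⟨m, hm⟩ : ∃ m, n = m + 1 := ⟨n - 1, by have := NeZero.pos n; omega⟩
  simp only [hm, arc_succ, Nat.add_sub_cancel]

lemma arc_eq_append_singleton (i : Fin n) : arc (i + 1) n = arc (i + 1) (n - 1) ++ [i] := by
  have hn : 1 ≤ n := NeZero.one_le
  have hcast : ((n - 1 : ℕ) : Fin n) + 1 = 0 := by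
    rw [← Nat.cast_add_one, Nat.sub_add_cancel hn, Fin.natCast_self]
  have h := arc_add (i + 1) (n - 1) 1
  rwa [Nat.sub_add_cancel hn, arc_succ, arc_zero, add_assoc, add_comm 1, hcast, add_zero] at h

lemma getElem_arc (s : Fin n) (L j : ℕ) (hj : j < (arc s L).length) :
    (arc s L)[j] = s + (j : Fin n) := by
  induction L generalizing s j with
  | zero => simp at hj
  | succ L ih =>
    cases j with
    | zero => simp
    | succ j => simp only [arc_succ, List.getElem_cons_succ, ih]; push_cast; ring

lemma reverse_map_neg_arc (s : Fin n) (L : ℕ) :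
    ((arc s L).map Neg.neg).reverse = arc (1 - s - (L : Fin n)) L := by
  induction L generalizing s with
  | zero => simp
  | succ L ih =>
    rw [arc_succ, List.map_cons, List.reverse_cons, ih, arc_add _ L 1, arc_succ, arc_zero]
    congr 2 <;> push_cast <;> ring

lemma finRotate_pow_apply (k : ℕ) (i : Fin n) : (finRotate n ^ k) i = i + (k : Fin n) := by
  induction k with
  | zero => simp
  | succ k ih => rw [pow_succ', Equiv.Perm.mul_apply, ih, finRotate_apply]; push_cast; ring

lemma map_finRange_finRotate_pow (k : ℕ) :
    (List.finRange n).map (finRotate n ^ k) = arc (k : Fin n) n := by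
  refine List.ext_getElem (by simp) fun j hj _ => ?_
  have hjn : j < n := by simpa using hj
  simp [finRotate_pow_apply, getElem_arc, add_comm, Fin.ext_iff, Nat.mod_eq_of_lt hjn]

lemma conGen_cycRel_le_ker {M : Type*} [Monoid M] (f : FreeMonoid (Fin n) →* M)
    (hf : ∀ s : Fin n, ((arc s n).map fun i => f (FreeMonoid.of i)).prod
      = ((arc 0 n).map fun i => f (FreeMonoid.of i)).prod) :
    conGen (cycRel n) ≤ Con.ker f := by
  refine Con.conGen_le.2 ?_
  rintro x y ⟨rfl, k, rfl⟩
  rw [Con.ker_rel, ← pow_zero (finRotate n), map_permWord, map_permWord,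
    map_finRange_finRotate_pow, map_finRange_finRotate_pow, Nat.cast_zero]
  exact (hf _).symm

lemma word_arc (s : Fin n) : word (arc s n) = zc n := by
  have h : (conGen (cycRel n)).mk' (permWord n 1) =
      (conGen (cycRel n)).mk' (permWord n (finRotate n ^ s.val)) :=
    (Con.eq _).2 (ConGen.Rel.of _ _ ⟨rfl, s.val, rfl⟩)
  rw [map_permWord, map_permWord, map_finRange_finRotate_pow, Fin.cast_val_eq_self,
    Equiv.Perm.coe_one, List.map_id] at h
  exact h.symm

lemma commute_agen_zc (i : Fin n) : Commute (agen i) (zc n) := by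
  calc agen i * zc n = agen i * word (arc (i + 1) n) := by rw [word_arc]
    _ = word (arc i n) * agen i := by
      rw [arc_eq_append_singleton, arc_eq_cons_append]
      simp [mul_assoc]
    _ = zc n * agen i := by rw [word_arc]

def NoFullArc (u : List (Fin n)) : Prop := ∀ s, ¬ arc s n <:+: u

lemma noFullArc_nil : NoFullArc ([] : List (Fin n)) := fun s h => by
  simpa [NeZero.ne n] using h.length_le

lemma NoFullArc.not_arc_prefix {u : List (Fin n)} (hu : NoFullArc u) {s : Fin n} {L : ℕ}
    (hL : n ≤ L) : ¬ arc s L <+: u :=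
  fun h => hu s ((arc_prefix_arc s hL).trans h).isInfix

def eval (p : ℕ × List (Fin n)) : Scyc n := zc n ^ p.1 * word p.2

-- Prepends `a_i` to `eval p`; a full arc created this way is `z`, moved into the central power.
def step (i : Fin n) (p : ℕ × List (Fin n)) : ℕ × List (Fin n) :=
  if arc (i + 1) (n - 1) <+: p.2 then (p.1 + 1, p.2.drop (n - 1)) else (p.1, i :: p.2)

lemma step_of_prefix {i : Fin n} {m : ℕ} {v : List (Fin n)} :
    step i (m, arc (i + 1) (n - 1) ++ v) = (m + 1, v) := by
  simp [step]

lemma step_of_not_prefix {i : Fin n} {m : ℕ} {u : List (Fin n)}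
    (h : ¬ arc (i + 1) (n - 1) <+: u) : step i (m, u) = (m, i :: u) := by
  simp [step, h]

lemma noFullArc_step (i : Fin n) {p : ℕ × List (Fin n)} (hp : NoFullArc p.2) :
    NoFullArc (step i p).2 := by
  obtain ⟨m, u⟩ := p
  by_cases h : arc (i + 1) (n - 1) <+: u
  · obtain ⟨v, rfl⟩ := h
    rw [step_of_prefix]
    exact fun s hs => hp s (hs.trans (List.suffix_append _ _).isInfix)
  · rw [step_of_not_prefix h]
    intro s hs
    rcases List.infix_cons_iff.mp hs with hs | hs
    · rw [arc_eq_cons_append, List.cons_prefix_cons] at hs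
      exact h (hs.1 ▸ hs.2)
    · exact hp s hs

lemma foldr_step_arc (s : Fin n) {l k : ℕ} (hlk : l + k = n) (m : ℕ) {u : List (Fin n)}
    (hu : NoFullArc u) :
    (arc s l).foldr step (m, u) =
      if arc (s + (l : Fin n)) k <+: u then (m + 1, u.drop k) else (m, arc s l ++ u) := by
  induction l generalizing s k with
  | zero =>
    obtain rfl : k = n := by omega
    simp [hu.not_arc_prefix le_rfl]
  | succ l ih =>
    rw [arc_succ, List.foldr_cons, ih (s + 1) (k := k + 1) (by omega)]
    have ht : s + 1 + (l : Fin n) = s + ((l + 1 : ℕ) : Fin n) := by push_cast; ring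
    have hzero : ((l + 1 + k : ℕ) : Fin n) = 0 := by rw [hlk, Fin.natCast_self]
    set t := s + ((l + 1 : ℕ) : Fin n)
    have hts : t + (k : Fin n) = s := by rw [add_assoc, ← Nat.cast_add, hzero, add_zero]
    have hn : n - 1 = l + k := by omega
    rw [ht]
    by_cases h : arc t (k + 1) <+: u
    · obtain ⟨v, rfl⟩ := h
      have hsplit : arc t (k + 1) = arc t k ++ [s] := by rw [arc_add, arc_succ, arc_zero, hts]
      have hv : ¬ arc (s + 1) (n - 1) <+: v := fun hv => by
        refine hu.not_arc_prefix (s := t) (L := k + 1 + (n - 1)) (by omega) ?_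
        rw [arc_add, Nat.cast_add, Nat.cast_one, ← add_assoc, hts]
        exact (List.prefix_append_right_inj _).2 hv
      rw [if_pos (List.prefix_append _ _), List.drop_left' (length_arc _ _), step_of_not_prefix hv,
        hsplit, if_pos ((List.prefix_append _ _).trans (List.prefix_append _ _)),
        List.append_assoc, List.drop_left' (length_arc _ _), List.singleton_append]
    · rw [if_neg h]
      by_cases h' : arc t k <+: u
      · obtain ⟨v, rfl⟩ := h'
        have hw : arc (s + 1) l ++ (arc t k ++ v) = arc (s + 1) (n - 1) ++ v := by
          rw [hn, arc_add, ht, List.append_assoc]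
        rw [hw, step_of_prefix, if_pos (List.prefix_append _ _), List.drop_left' (length_arc _ _)]
      · have hw : ¬ arc (s + 1) (n - 1) <+: arc (s + 1) l ++ u := by
          rwa [hn, arc_add, ht, List.prefix_append_right_inj]
        rw [step_of_not_prefix hw, if_neg h', List.cons_append]

lemma foldr_step_arc_self (s : Fin n) (m : ℕ) {u : List (Fin n)} (hu : NoFullArc u) :
    (arc s n).foldr step (m, u) = (m + 1, u) := by
  simp [foldr_step_arc s (Nat.add_zero n) m hu]

def unstep (i : Fin n) (p : ℕ × List (Fin n)) : ℕ × List (Fin n) :=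
  if p.2.head? = some i then (p.1, p.2.tail) else (p.1 - 1, arc (i + 1) (n - 1) ++ p.2)

lemma unstep_step (i : Fin n) {p : ℕ × List (Fin n)} (hp : NoFullArc p.2) :
    unstep i (step i p) = p := by
  obtain ⟨m, u⟩ := p
  by_cases h : arc (i + 1) (n - 1) <+: u
  · obtain ⟨v, rfl⟩ := h
    have hv : v.head? ≠ some i := fun hv => by
      obtain ⟨w, rfl⟩ := List.head?_eq_some_iff.1 hv
      refine hp.not_arc_prefix le_rfl (s := i + 1) ⟨w, ?_⟩
      rw [arc_eq_append_singleton, List.append_assoc, List.singleton_append]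
    simp [step_of_prefix, unstep, hv]
  · simp [step_of_not_prefix h, unstep]

lemma eval_step (i : Fin n) (p : ℕ × List (Fin n)) : eval (step i p) = agen i * eval p := by
  obtain ⟨m, u⟩ := p
  have hcomm : agen i * zc n ^ m = zc n ^ m * agen i := ((commute_agen_zc i).pow_right m).eq
  by_cases h : arc (i + 1) (n - 1) <+: u
  · obtain ⟨v, rfl⟩ := h
    rw [step_of_prefix]
    calc zc n ^ (m + 1) * word v = zc n ^ m * word (arc i n) * word v := by rw [word_arc, pow_succ]
      _ = agen i * (zc n ^ m * word (arc (i + 1) (n - 1) ++ v)) := by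
        rw [arc_eq_cons_append, word_cons, word_append]
        simp only [← mul_assoc, hcomm]
  · rw [step_of_not_prefix h]
    simp only [eval, word_cons, ← mul_assoc, hcomm]

variable (n) in
def NormalForm : Type := {p : ℕ × List (Fin n) // NoFullArc p.2}

namespace NormalForm

def nil : NormalForm n := ⟨(0, []), noFullArc_nil⟩

def cons (i : Fin n) : Function.End (NormalForm n) :=
  fun p => ⟨step i p.1, noFullArc_step i p.2⟩

lemma cons_injective (i : Fin n) : Function.Injective (cons i) := fun p q h => Subtype.ext <| by
  rw [← unstep_step i p.2, ← unstep_step i q.2]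
  exact congrArg (unstep i ∘ Subtype.val) h

lemma val_prod_map_cons (l : List (Fin n)) (p : NormalForm n) :
    ((l.map cons).prod p).1 = l.foldr step p.1 := by
  induction l with
  | nil => rfl
  | cons i l ih => rw [List.map_cons, List.prod_cons, List.foldr_cons, ← ih]; rfl

end NormalForm

def act : Scyc n →* Function.End (NormalForm n) :=
  (conGen (cycRel n)).lift (FreeMonoid.lift NormalForm.cons) <| conGen_cycRel_le_ker _ fun s =>
    funext fun p => Subtype.ext <| by
      change (((arc s n).map NormalForm.cons).prod p).1 = (((arc 0 n).map NormalForm.cons).prod p).1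
      rw [NormalForm.val_prod_map_cons, NormalForm.val_prod_map_cons, foldr_step_arc_self _ _ p.2,
        foldr_step_arc_self _ _ p.2]

lemma act_mul_apply (x y : Scyc n) (p : NormalForm n) : act (x * y) p = act x (act y p) := by
  rw [map_mul]
  rfl

lemma act_agen_apply (i : Fin n) (p : NormalForm n) : act (agen i) p = NormalForm.cons i p := rfl

lemma eval_act_nil (x : Scyc n) : eval (act x NormalForm.nil).1 = x := by
  induction x using induction_on with
  | one => rw [map_one]; exact (mul_one _).trans (pow_zero _)
  | agen_mul i x ih => rw [act_mul_apply, act_agen_apply, NormalForm.cons, eval_step, ih]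

lemma act_injective (s : Scyc n) : Function.Injective (act s) := by
  induction s using induction_on with
  | one => rw [map_one]; exact Function.injective_id
  | agen_mul i x ih =>
    intro p q h
    simp only [act_mul_apply, act_agen_apply] at h
    exact ih (NormalForm.cons_injective i h)

def revHom : Scyc n →* (Scyc n)ᵐᵒᵖ :=
  (conGen (cycRel n)).lift (FreeMonoid.lift fun i => MulOpposite.op (agen (-i))) <|
    conGen_cycRel_le_ker _ fun s => MulOpposite.unop_injective <| by
      simp only [FreeMonoid.lift_eval_of, unop_prod_map_op_agen_neg, reverse_map_neg_arc, word_arc]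

def rev (x : Scyc n) : Scyc n := (revHom x).unop

lemma rev_mul (x y : Scyc n) : rev (x * y) = rev y * rev x := by
  simp [rev, map_mul]

lemma rev_agen (i : Fin n) : rev (agen i) = agen (-i) := rfl

lemma rev_rev (x : Scyc n) : rev (rev x) = x := by
  induction x using induction_on with
  | one => simp [rev]
  | agen_mul i x ih => rw [rev_mul, rev_mul, rev_agen, rev_agen, neg_neg, ih]

lemma isLeftRegular (s : Scyc n) : IsLeftRegular s := fun x y (h : s * x = s * y) => by
  have hxy : act x NormalForm.nil = act y NormalForm.nil :=
    act_injective s (by rw [← act_mul_apply, h, act_mul_apply])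
  rw [← eval_act_nil x, hxy, eval_act_nil]

lemma isRightRegular (s : Scyc n) : IsRightRegular s := fun x y (h : x * s = y * s) => by
  have hxy : rev s * rev x = rev s * rev y := by
    simp only [← rev_mul]
    exact congrArg rev h
  rw [← rev_rev x, isLeftRegular (rev s) hxy, rev_rev]

instance : IsCancelMul (Scyc n) where
  mul_left_cancel := isLeftRegular
  mul_right_cancel := isRightRegular

end

end Scyc

theorem cancellative_general (n : ℕ) :
    ∀ x y s : Scyc n, (s * x = s * y → x = y) ∧ (x * s = y * s → x = y) := by
  intro x y s
  rcases eq_zero_or_neZero n with rfl | _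
  · exact ⟨fun _ => Subsingleton.elim x y, fun _ => Subsingleton.elim x y⟩
  · exact ⟨mul_left_cancel, mul_right_cancel⟩

/-- `S_n` is (left and right) cancellative. -/
theorem cancellative (n : ℕ) (hn : 3 ≤ n) :
    ∀ x y s : Scyc n, (s * x = s * y → x = y) ∧ (x * s = y * s → x = y) :=
  cancellative_general n
end

section
/- Let K be a field, n ≥ 3, and let S_n be the monoid presented by generators a_1, …, a_n and relations a_1 a_2 ⋯ a_n = a_{σ(1)} ⋯ a_{σ(n)} for σ in the cyclic group generated by the n-cycle. Let P = (a_1 ⋯ a_n)·S_n. Then the prime ideal K[P] of K[S_n] has height one: if P_0 is a nonzero prime two-sided ideal of K[S_n] with P_0 ⊆ K[P], then P_0 = K[P]. -/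
lemma permWord_toList (n : ℕ) (σ : Equiv.Perm (Fin n)) :
    (permWord n σ).toList = List.ofFn σ := by
  rw [permWord, List.ofFn_eq_map]
  induction List.finRange n with
  | nil => rfl
  | cons a l ih => simp [ih]

lemma of_mul_permWord_mul_finRotate (m : ℕ) (σ : Equiv.Perm (Fin (m + 1))) :
    FreeMonoid.of (σ 0) * permWord (m + 1) (σ * finRotate (m + 1))
      = permWord (m + 1) σ * FreeMonoid.of (σ 0) := by
  apply FreeMonoid.toList.injective
  simp only [FreeMonoid.toList_mul, permWord_toList, FreeMonoid.toList_of, Equiv.Perm.coe_mul]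
  rw [List.ofFn_succ' (⇑σ ∘ _), List.ofFn_succ (f := ⇑σ)]
  simp

lemma finRotate_pow_apply_zero (m : ℕ) (i : Fin (m + 1)) :
    (finRotate (m + 1) ^ (i : ℕ)) 0 = i := by
  rw [Equiv.Perm.coe_pow, ← finCycle_eq_finRotate_iterate]
  simp

def FreeMonoid.lengthHom (α : Type*) : FreeMonoid α →* Multiplicative ℕ where
  toFun w := .ofAdd w.length
  map_one' := rfl
  map_mul' := FreeMonoid.length_mul

namespace Scyc

lemma mk'_permWord_finRotate_pow (n k : ℕ) :
    (conGen (cycRel n)).mk' (permWord n (finRotate n ^ k)) = zc n := by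
  have hzc : zc n = (conGen (cycRel n)).mk' (permWord n 1) := by
    rw [permWord, map_list_prod, List.map_map, zc]
    rfl
  rw [hzc, eq_comm]
  exact (Con.eq _).2 <| ConGen.Rel.of _ _ ⟨rfl, k, rfl⟩

lemma agen_mul_zc {n : ℕ} (i : Fin n) : agen i * zc n = zc n * agen i := by
  obtain ⟨m, rfl⟩ : ∃ m, n = m + 1 := ⟨n - 1, by have := i.pos; omega⟩
  have h := congrArg (conGen (cycRel (m + 1))).mk'
    (of_mul_permWord_mul_finRotate m (finRotate (m + 1) ^ (i : ℕ)))
  rwa [map_mul, map_mul, ← pow_succ, mk'_permWord_finRotate_pow, mk'_permWord_finRotate_pow,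
    finRotate_pow_apply_zero] at h

lemma commute_zc {n : ℕ} (x : Scyc n) : Commute (zc n) x := by
  obtain ⟨w, rfl⟩ := Con.mk'_surjective x
  induction w using FreeMonoid.inductionOn' with
  | one => exact Commute.one_right _
  | of_mul i w ih =>
    rw [map_mul]
    exact Commute.mul_right (agen_mul_zc i).symm ih

def length (n : ℕ) : Scyc n →* Multiplicative ℕ :=
  Con.lift _ (FreeMonoid.lengthHom (Fin n)) <| Con.conGen_le.2 <| by
    rintro x y ⟨rfl, k, rfl⟩
    simp [FreeMonoid.lengthHom, FreeMonoid.length, permWord_toList]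

lemma length_zc_mul (n : ℕ) (x : Scyc n) :
    (length n (zc n * x)).toAdd = n + (length n x).toAdd := by
  rw [map_mul, toAdd_mul, ← mk'_permWord_finRotate_pow n 0]
  change (permWord n _).length + _ = _
  simp [FreeMonoid.length, permWord_toList]

end Scyc

lemma add_le_pow_mul_of_forall_lt_mul {M : Type*} [Monoid M] {z : M} (deg : M → ℕ)
    (hdeg : ∀ m, deg m < deg (z * m)) (i : ℕ) (m : M) : i + deg m ≤ deg (z ^ i * m) := by
  induction i generalizing m with
  | zero => simp
  | succ i ih =>
    have := ih (z * m)
    have := hdeg m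
    rw [pow_succ, mul_assoc]
    omega

lemma MonoidAlgebra.eq_zero_of_forall_of_pow_dvd {k M : Type*} [Semiring k] [Monoid M] {z : M}
    (deg : M → ℕ) (hdeg : ∀ m, deg m < deg (z * m)) {x : MonoidAlgebra k M}
    (hx : ∀ i, MonoidAlgebra.of k M z ^ i ∣ x) : x = 0 := by
  classical
  by_contra hx0
  obtain ⟨s, hs⟩ : x.coeff.support.Nonempty := by simpa using hx0
  obtain ⟨y, rfl⟩ := hx (deg s + 1)
  rw [← map_pow, of_apply] at hs
  obtain ⟨t, -, hts⟩ := Finset.mem_image.1 (support_coeff_single_mul_subset y 1 _ hs)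
  have := add_le_pow_mul_of_forall_lt_mul deg hdeg (deg s + 1) t
  rw [hts] at this
  omega

lemma MonoidAlgebra.of_dvd_of_mem_span {k M : Type*} [CommSemiring k] [Monoid M] (z : M)
    {x : MonoidAlgebra k M} (hx : x ∈ Submodule.span k (of k M '' {m | ∃ s, m = z * s})) :
    of k M z ∣ x := by
  induction hx using Submodule.span_induction with
  | mem _ h =>
    obtain ⟨_, ⟨s, rfl⟩, rfl⟩ := h
    exact ⟨of k M s, map_mul _ _ _⟩
  | zero => exact dvd_zero _
  | add _ _ _ _ h₁ h₂ => exact dvd_add h₁ h₂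
  | smul c _ _ h =>
    obtain ⟨y, rfl⟩ := h
    exact ⟨c • y, (mul_smul_comm c _ y).symm⟩

lemma Ideal.pow_dvd_of_mem_of_notMem {R : Type*} [Semiring R] {P : Ideal R}
    (hP : ∀ a b : R, (∀ r, a * r * b ∈ P) → a ∈ P ∨ b ∈ P) {z : R} (hz : ∀ r, Commute z r)
    (hzP : z ∉ P) (hdvd : ∀ x ∈ P, z ∣ x) {x : R} (hx : x ∈ P) (i : ℕ) : z ^ i ∣ x := by
  suffices ∀ x ∈ P, ∃ y ∈ P, x = z ^ i * y by
    obtain ⟨y, -, rfl⟩ := this x hx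
    exact dvd_mul_right _ _
  induction i with
  | zero => exact fun x hx => ⟨x, hx, by rw [pow_zero, one_mul]⟩
  | succ i ih =>
    intro x hx
    obtain ⟨y, hy, rfl⟩ := ih x hx
    obtain ⟨y', rfl⟩ := hdvd y hy
    have hy' : y' ∈ P := (hP z y' fun r => by
      rw [(hz r).eq, mul_assoc]; exact P.mul_mem_left r hy).resolve_left hzP
    exact ⟨y', hy', by rw [pow_succ, mul_assoc]⟩

theorem KP_height_one_general (K : Type*) [Field K] (n : ℕ) (hn : 3 ≤ n)
    (KP : Submodule K (MonoidAlgebra K (Scyc n)))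
    (hKP : KP = Submodule.span K (MonoidAlgebra.of K (Scyc n) '' {x | ∃ s, x = zc n * s}))
    (P₀ : Ideal (MonoidAlgebra K (Scyc n)))
    (hright : ∀ x ∈ P₀, ∀ r : MonoidAlgebra K (Scyc n), x * r ∈ P₀)
    (hnonzero : P₀ ≠ ⊥)
    (hprime : ∀ a b : MonoidAlgebra K (Scyc n), (∀ r, a * r * b ∈ P₀) → a ∈ P₀ ∨ b ∈ P₀)
    (hsub : (P₀ : Set (MonoidAlgebra K (Scyc n))) ⊆ (KP : Set (MonoidAlgebra K (Scyc n)))) :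
    (P₀ : Set (MonoidAlgebra K (Scyc n))) = (KP : Set (MonoidAlgebra K (Scyc n))) := by
  subst hKP
  have hz : MonoidAlgebra.of K (Scyc n) (zc n) ∈ P₀ := by
    by_contra hzP
    obtain ⟨x, hxP, hx0⟩ := Submodule.exists_mem_ne_zero_of_ne_bot hnonzero
    refine hx0 (MonoidAlgebra.eq_zero_of_forall_of_pow_dvd (fun s => (Scyc.length n s).toAdd)
      (fun s => by rw [Scyc.length_zc_mul]; omega) fun i => ?_)
    exact Ideal.pow_dvd_of_mem_of_notMem hprime
      (MonoidAlgebra.of_commute Scyc.commute_zc) hzP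
      (fun y hy => MonoidAlgebra.of_dvd_of_mem_span _ (hsub hy)) hxP i
  refine hsub.antisymm fun x hx => (Submodule.span_le (p := P₀.restrictScalars K)).2 ?_ hx
  rintro _ ⟨_, ⟨s, rfl⟩, rfl⟩
  rw [map_mul]
  exact hright _ hz _

/-- the prime ideal `K[P]` of `K[S_n]` has height one: every nonzero prime
two-sided ideal `P₀` of `K[S_n]` contained in `K[P]` equals `K[P]`. -/
theorem KP_height_one (K : Type*) [Field K] (n : ℕ) (hn : 3 ≤ n)
    (KP : Submodule K (MonoidAlgebra K (Scyc n)))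
    (hKP : KP = Submodule.span K (MonoidAlgebra.of K (Scyc n) '' {x | ∃ s, x = zc n * s}))
    (P₀ : Ideal (MonoidAlgebra K (Scyc n)))
    (hright : ∀ x ∈ P₀, ∀ r : MonoidAlgebra K (Scyc n), x * r ∈ P₀)
    (hnonzero : P₀ ≠ ⊥)
    (hproper : P₀ ≠ ⊤)
    (hprime : ∀ a b : MonoidAlgebra K (Scyc n), (∀ r, a * r * b ∈ P₀) → a ∈ P₀ ∨ b ∈ P₀)
    (hsub : (P₀ : Set (MonoidAlgebra K (Scyc n))) ⊆ (KP : Set (MonoidAlgebra K (Scyc n)))) :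
    (P₀ : Set (MonoidAlgebra K (Scyc n))) = (KP : Set (MonoidAlgebra K (Scyc n))) :=
  KP_height_one_general K n hn KP hKP P₀ hright hnonzero hprime hsub
end

section
/- Let K be a field, n ≥ 3, and let M = S_n(Sym_n) be the monoid presented by generators a_1, …, a_n and relations a_1 a_2 ⋯ a_n = a_{σ(1)} ⋯ a_{σ(n)} for all σ ∈ Sym_n. Let z = a_1 ⋯ a_n, let C be the two-sided ideal of the monoid algebra K[M] generated by all commutators a_i a_j − a_j a_i (i ≠ j), and let K[Mz] be the K-linear span of the ideal Mz in K[M]. Then K[Mz] ∩ C = 0; equivalently, K[M] is a subdirect product of K[M]/C and K[M]/K[Mz], i.e. the natural ring homomorphism K[M] → (K[M]/C) × (K[M]/K[Mz]) is injective. Moreover, K[M]/C is isomorphic as a K-algebra to the commutative polynomial algebra K[x_1, …, x_n]. -/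
/-- The defining relations `a_1 a_2 ⋯ a_n = a_{σ(1)} a_{σ(2)} ⋯ a_{σ(n)}` for all
permutations `σ ∈ Sym_n`. -/
def symRel (n : ℕ) : FreeMonoid (Fin n) → FreeMonoid (Fin n) → Prop :=
  fun x y => x = permWord n 1 ∧ ∃ σ : Equiv.Perm (Fin n), y = permWord n σ

/-- The monoid `M = S_n(Sym_n)` presented by generators `a_1, …, a_n` and the above relations. -/
def Msym (n : ℕ) : Type := (conGen (symRel n)).Quotient

instance (n : ℕ) : Monoid (Msym n) := Con.monoid _

/-- The generator `a_i` of `M`. -/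
def mgen {n : ℕ} (i : Fin n) : Msym n := (conGen (symRel n)).mk' (FreeMonoid.of i)

/-- The element `z = a_1 a_2 ⋯ a_n` of `M`. -/
def zs (n : ℕ) : Msym n := ((List.finRange n).map mgen).prod

/-!
The abelianization `M → ℕⁿ`, `a_i ↦ e_i`, induces a `K`-algebra map `φ : K[M] → K[x_1, …, x_n]`
with a linear section sending `x^t` to a word with letter multiplicities `t`. Two words with the
same image are permutations of each other, hence congruent modulo the commutators; so every
element is congruent mod `C` to the section of its image, and `ker φ = C`.

Since every permutation of `a_1 ⋯ a_n` equals `z`, the element `z` is central and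
`a_i a_j z = a_j a_i z`, so `C z = 0`. Now `K[Mz] = K[M] z` is a two-sided ideal, and an element
`b z` of it lying in `C` satisfies `φ(b) x_1 ⋯ x_n = 0`; hence `φ(b) = 0`, `b ∈ C` and `b z = 0`.
-/

lemma mul_eq_mul_of_ringConGen {R : Type*} [Semiring R] {r : R → R → Prop} {ζ : R}
    (hζ : ∀ a, Commute a ζ) (hr : ∀ x y, r x y → x * ζ = y * ζ) {x y : R}
    (h : ringConGen r x y) : x * ζ = y * ζ := by
  induction h with
  | of x y h => exact hr x y h
  | refl => rfl
  | symm _ ih => exact ih.symm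
  | trans _ _ ih₁ ih₂ => exact ih₁.trans ih₂
  | add _ _ ih₁ ih₂ => rw [add_mul, add_mul, ih₁, ih₂]
  | @mul w x y z _ _ ih₁ ih₂ =>
    calc w * y * ζ = w * ζ * z := by rw [mul_assoc, ih₂, (hζ z).eq, mul_assoc]
      _ = x * z * ζ := by rw [ih₁, mul_assoc, ← (hζ z).eq, mul_assoc]

theorem Ideal.isTwoSided_span_singleton {R : Type*} [Semiring R] {ζ : R}
    (hζ : ∀ a, Commute a ζ) : (Ideal.span {ζ}).IsTwoSided := by
  refine ⟨fun b hx => ?_⟩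
  obtain ⟨a, rfl⟩ := Ideal.mem_span_singleton'.1 hx
  rw [mul_assoc, ← (hζ b).eq, ← mul_assoc]
  exact Ideal.mul_mem_left _ _ (Ideal.mem_span_singleton_self ζ)

lemma Ideal.sub_mem_of_ringConGen {R : Type*} [Ring R] (I : Ideal R) [I.IsTwoSided] {x y : R}
    (h : ringConGen (fun a b => a - b ∈ I) x y) : x - y ∈ I := by
  have hle : ringConGen (fun a b => a - b ∈ I) ≤ I.toTwoSided.ringCon :=
    RingCon.ringConGen_le.2 fun a b hab =>
      (TwoSidedIdeal.rel_iff _ _ _).2 (I.mem_toTwoSided.2 hab)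
  exact I.mem_toTwoSided.1 ((TwoSidedIdeal.rel_iff _ _ _).1 (hle h))

theorem MonoidAlgebra.mem_span_of_image_mul_iff {k G : Type*} [CommSemiring k] [Monoid G]
    (g : G) (x : MonoidAlgebra k G) :
    x ∈ Submodule.span k (of k G '' {m | ∃ m', m = m' * g}) ↔ x ∈ Ideal.span {of k G g} := by
  change x ∈ Submodule.span k ((fun m => single m (1 : k)) '' _) ↔ _
  rw [← supported_eq_span_single, mem_supported, ← Set.image_singleton,
    mem_ideal_span_of_image]
  simp [Set.subset_def]

namespace Msym

variable {n : ℕ}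

def ofList (w : List (Fin n)) : Msym n := (w.map mgen).prod

@[simp] lemma ofList_nil : ofList ([] : List (Fin n)) = 1 := rfl

@[simp] lemma ofList_cons (i : Fin n) (w : List (Fin n)) :
    ofList (i :: w) = mgen i * ofList w := List.prod_cons

@[simp] lemma ofList_append (u v : List (Fin n)) : ofList (u ++ v) = ofList u * ofList v := by
  simp [ofList]

lemma ofList_surjective : Function.Surjective (ofList : List (Fin n) → Msym n) := by
  intro m
  induction m using Con.induction_on with | H x => ?_
  induction x using FreeMonoid.inductionOn' with
  | one => exact ⟨[], rfl⟩
  | of_mul i x ih =>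
    obtain ⟨w, hw⟩ := ih
    exact ⟨i :: w, by rw [ofList_cons, hw]; rfl⟩

lemma ofList_eq_zs_of_perm {w : List (Fin n)} (h : w.Perm (List.finRange n)) :
    ofList w = zs n := by
  have hlen : w.length = n := by simpa using h.length_eq
  let σ : Equiv.Perm (Fin n) := (finCongr hlen.symm).trans <|
    List.Nodup.getEquivOfForallMemList w (h.nodup_iff.2 (List.nodup_finRange n))
      fun i => h.mem_iff.2 (List.mem_finRange i)
  have hσ : (List.finRange n).map σ = w := by
    refine List.ext_getElem (by simp [hlen]) fun _ _ _ => ?_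
    simp [σ, List.Nodup.getEquivOfForallMemList]
  have hrel : (conGen (symRel n)).mk' (permWord n σ) = (conGen (symRel n)).mk' (permWord n 1) :=
    ((conGen (symRel n)).eq.2 (ConGen.Rel.of _ _ ⟨rfl, σ, rfl⟩)).symm
  have hmk : ∀ τ : Equiv.Perm (Fin n),
      (conGen (symRel n)).mk' (permWord n τ) = ofList ((List.finRange n).map τ) := fun τ => by
    simp only [permWord, map_list_prod, List.map_map, ofList]; rfl
  rw [hmk, hmk, hσ, Equiv.Perm.coe_one, List.map_id] at hrel
  exact hrel

lemma ofList_mul_zs_of_perm {u v : List (Fin n)} (hu : u.Nodup) (hvu : v.Perm u) :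
    ofList v * zs n = zs n * ofList u := by
  obtain ⟨u', hu'u, hu'⟩ := hu.subperm fun i _ => List.mem_finRange i
  obtain ⟨r, hr⟩ := hu'.exists_perm_append
  -- both `r ++ u` and `v ++ r` spell `z`
  have hur : (u ++ r).Perm (List.finRange n) := ((hu'u.append_right r).symm.trans hr.symm)
  calc ofList v * zs n = ofList v * ofList (r ++ u) := by
        rw [ofList_eq_zs_of_perm (List.perm_append_comm.trans hur)]
    _ = ofList (v ++ r) * ofList u := by simp [mul_assoc]
    _ = zs n * ofList u := by rw [ofList_eq_zs_of_perm ((hvu.append_right r).trans hur)]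

lemma commute_zs (m : Msym n) : Commute m (zs n) := by
  obtain ⟨w, rfl⟩ := ofList_surjective m
  induction w with
  | nil => exact Commute.one_left _
  | cons i w ih =>
    have hi : Commute (mgen i) (zs n) := by
      simpa [Commute, SemiconjBy] using
        ofList_mul_zs_of_perm (List.nodup_singleton i) (List.Perm.refl _)
    simpa using hi.mul_left ih

lemma mgen_mul_mgen_mul_zs (i j : Fin n) : mgen i * mgen j * zs n = mgen j * mgen i * zs n := by
  rcases eq_or_ne i j with rfl | hij
  · rfl
  have hij' : [i, j].Nodup := by simp [hij]
  have h₁ := ofList_mul_zs_of_perm hij' (List.Perm.refl _)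
  have h₂ := ofList_mul_zs_of_perm hij' (List.Perm.swap i j [])
  simp only [ofList_cons, ofList_nil, mul_one] at h₁ h₂
  rw [h₁, h₂]

def lift {A : Type*} [CommMonoid A] (g : Fin n → A) : Msym n →* A :=
  Con.lift _ (FreeMonoid.lift g) <| Con.conGen_le.2 fun x y ⟨hx, σ, hy⟩ => by
    subst hx hy
    simp only [Con.ker_rel, permWord, map_list_prod, List.map_map, Function.comp_def,
      FreeMonoid.lift_eval_of, ← Fin.prod_univ_def, Equiv.prod_comp σ g]
    rfl

lemma lift_ofList {A : Type*} [CommMonoid A] (g : Fin n → A) (w : List (Fin n)) :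
    lift g (ofList w) = (w.map g).prod := by
  simp only [ofList, map_list_prod, List.map_map]
  rfl

noncomputable def abel (n : ℕ) : Msym n →* Multiplicative (Fin n →₀ ℕ) :=
  lift fun i => .ofAdd (Finsupp.single i 1)

lemma abel_ofList (w : List (Fin n)) : abel n (ofList w) = .ofAdd (Multiset.toFinsupp w) := by
  rw [abel, lift_ofList]
  induction w with
  | nil => simp
  | cons i w ih =>
    rw [List.map_cons, List.prod_cons, ih, ← Multiset.cons_coe, ← Multiset.singleton_add,
      Multiset.toFinsupp_add, Multiset.toFinsupp_singleton]
    rfl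

lemma perm_of_abel_ofList_eq {u v : List (Fin n)} (h : abel n (ofList u) = abel n (ofList v)) :
    u.Perm v := by
  rw [abel_ofList, abel_ofList] at h
  exact Multiset.coe_eq_coe.1 (Multiset.toFinsupp.injective (Multiplicative.ofAdd.injective h))

noncomputable def ofFinsupp (t : Fin n →₀ ℕ) : Msym n := ofList (Finsupp.toMultiset t).toList

lemma abel_ofFinsupp (t : Fin n →₀ ℕ) : abel n (ofFinsupp t) = .ofAdd t := by
  rw [ofFinsupp, abel_ofList, Multiset.coe_toList, Multiset.toFinsupp_eq_iff.2 rfl]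

section CommutatorCon

open MonoidAlgebra

variable (K : Type*) [CommRing K] (n : ℕ)

noncomputable def commutatorCon : RingCon (MonoidAlgebra K (Msym n)) :=
  ringConGen fun x y => ∃ i j : Fin n, i ≠ j ∧
    x = MonoidAlgebra.of K (Msym n) (mgen i) * MonoidAlgebra.of K (Msym n) (mgen j) ∧
    y = MonoidAlgebra.of K (Msym n) (mgen j) * MonoidAlgebra.of K (Msym n) (mgen i)

noncomputable def abelAlgHom : MonoidAlgebra K (Msym n) →ₐ[K] MvPolynomial (Fin n) K :=
  MonoidAlgebra.lift K _ (Msym n) ((MvPolynomial.monomialOneHom K (Fin n)).comp (abel n))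

noncomputable def normalForm : MvPolynomial (Fin n) K →ₗ[K] MonoidAlgebra K (Msym n) :=
  (MvPolynomial.basisMonomials (Fin n) K).constr K fun t => of K (Msym n) (ofFinsupp t)

variable {K n}

lemma abelAlgHom_of (m : Msym n) :
    abelAlgHom K n (of K (Msym n) m) = MvPolynomial.monomial (abel n m).toAdd 1 := by
  rw [abelAlgHom, lift_of]
  rfl

lemma normalForm_monomial (t : Fin n →₀ ℕ) :
    normalForm K n (MvPolynomial.monomial t 1) = of K (Msym n) (ofFinsupp t) := by
  change normalForm K n (MvPolynomial.basisMonomials (Fin n) K t) = _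
  rw [normalForm, Module.Basis.constr_basis]

lemma abelAlgHom_normalForm (p : MvPolynomial (Fin n) K) :
    abelAlgHom K n (normalForm K n p) = p := by
  have : (abelAlgHom K n).toLinearMap ∘ₗ normalForm K n = LinearMap.id :=
    (MvPolynomial.basisMonomials (Fin n) K).ext fun t => by
      rw [MvPolynomial.coe_basisMonomials, LinearMap.comp_apply, AlgHom.toLinearMap_apply,
        normalForm_monomial, abelAlgHom_of, abel_ofFinsupp]
      rfl
  exact LinearMap.congr_fun this p

lemma commutatorCon_of_ofList_perm {u v : List (Fin n)} (h : u.Perm v) :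
    commutatorCon K n (of K (Msym n) (ofList u)) (of K (Msym n) (ofList v)) := by
  induction h with
  | nil => exact RingCon.refl _ _
  | cons i _ ih =>
    simpa only [ofList_cons, map_mul] using (commutatorCon K n).mul (RingCon.refl _ _) ih
  | swap i j w =>
    simp only [ofList_cons, map_mul, ← mul_assoc]
    refine (commutatorCon K n).mul ?_ (RingCon.refl _ _)
    rcases eq_or_ne i j with rfl | hij
    · exact RingCon.refl _ _
    · exact RingConGen.Rel.of _ _ ⟨j, i, hij.symm, rfl, rfl⟩
  | trans _ _ ih₁ ih₂ => exact (commutatorCon K n).trans ih₁ ih₂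

lemma commutatorCon_of_of_abel_eq {m m' : Msym n} (h : abel n m = abel n m') :
    commutatorCon K n (of K (Msym n) m) (of K (Msym n) m') := by
  obtain ⟨u, rfl⟩ := ofList_surjective m
  obtain ⟨v, rfl⟩ := ofList_surjective m'
  exact commutatorCon_of_ofList_perm (perm_of_abel_ofList_eq h)

lemma commutatorCon_normalForm_abelAlgHom (x : MonoidAlgebra K (Msym n)) :
    commutatorCon K n x (normalForm K n (abelAlgHom K n x)) := by
  induction x using MonoidAlgebra.induction_on with
  | of m =>
    rw [abelAlgHom_of, normalForm_monomial]
    exact commutatorCon_of_of_abel_eq (abel_ofFinsupp _).symm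
  | add x y hx hy =>
    rw [map_add (abelAlgHom K n), map_add (normalForm K n)]
    exact (commutatorCon K n).add hx hy
  | smul r x hx =>
    rw [map_smul (abelAlgHom K n), map_smul (normalForm K n)]
    exact (commutatorCon K n).smul r hx

theorem commutatorCon_eq_ker : commutatorCon K n = RingCon.ker (abelAlgHom K n).toRingHom := by
  refine le_antisymm (RingCon.ringConGen_le.2 ?_) fun x y hxy => ?_
  · rintro x y ⟨i, j, -, rfl, rfl⟩
    simp only [RingCon.ker_apply, map_mul, mul_comm]
  · have hxy : abelAlgHom K n x = abelAlgHom K n y := hxy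
    refine (commutatorCon K n).trans (commutatorCon_normalForm_abelAlgHom x) ?_
    rw [hxy]
    exact (commutatorCon K n).symm (commutatorCon_normalForm_abelAlgHom y)

end CommutatorCon

section Intersection

open MonoidAlgebra

variable {K : Type*} [CommRing K] {n : ℕ}

lemma commute_of_zs (a : MonoidAlgebra K (Msym n)) : Commute a (of K (Msym n) (zs n)) :=
  (of_commute (fun m => (commute_zs m).symm) a).symm

lemma mul_of_zs_eq_of_commutatorCon {x y : MonoidAlgebra K (Msym n)}
    (h : commutatorCon K n x y) : x * of K (Msym n) (zs n) = y * of K (Msym n) (zs n) := by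
  refine mul_eq_mul_of_ringConGen commute_of_zs ?_ h
  rintro _ _ ⟨i, j, -, rfl, rfl⟩
  simp only [← map_mul, mgen_mul_mgen_mul_zs]

lemma eq_zero_of_mem_span_of_commutatorCon {x : MonoidAlgebra K (Msym n)}
    (hx : x ∈ Ideal.span {of K (Msym n) (zs n)}) (h : commutatorCon K n x 0) : x = 0 := by
  obtain ⟨b, rfl⟩ := Ideal.mem_span_singleton'.1 hx
  rw [commutatorCon_eq_ker] at h
  have hb : commutatorCon K n b 0 := by
    rw [commutatorCon_eq_ker]
    refine (isRegular_one.monomial (m := (abel n (zs n)).toAdd)).right ?_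
    simpa only [RingCon.ker_apply, AlgHom.toRingHom_eq_coe, RingHom.coe_coe, map_mul, map_zero,
      zero_mul, abelAlgHom_of] using h
  simpa using mul_of_zs_eq_of_commutatorCon hb

end Intersection

end Msym

theorem subdirect_product_general (K : Type*) [Field K] (n : ℕ)
    (KMz : Submodule K (MonoidAlgebra K (Msym n)))
    (hKMz : KMz = Submodule.span K (MonoidAlgebra.of K (Msym n) '' {x | ∃ m, x = m * zs n}))
    (c : RingCon (MonoidAlgebra K (Msym n)))
    (hc : c = ringConGen (fun x y => ∃ i j : Fin n, i ≠ j ∧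
      x = MonoidAlgebra.of K (Msym n) (mgen i) * MonoidAlgebra.of K (Msym n) (mgen j) ∧
      y = MonoidAlgebra.of K (Msym n) (mgen j) * MonoidAlgebra.of K (Msym n) (mgen i)))
    (d : RingCon (MonoidAlgebra K (Msym n)))
    (hd : d = ringConGen (fun x y => x - y ∈ KMz)) :
    (∀ x : MonoidAlgebra K (Msym n), x ∈ KMz → c x 0 → x = 0) ∧
    Function.Injective (fun x : MonoidAlgebra K (Msym n) => (c.mk' x, d.mk' x)) ∧
    (∃ e : c.Quotient ≃+* MvPolynomial (Fin n) K,
      ∀ a : K, e (c.mk' (algebraMap K (MonoidAlgebra K (Msym n)) a)) = MvPolynomial.C a) := by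
  subst hKMz
  obtain rfl : c = Msym.commutatorCon K n := hc
  simp only [MonoidAlgebra.mem_span_of_image_mul_iff] at hd ⊢
  subst hd
  have := Ideal.isTwoSided_span_singleton (Msym.commute_of_zs (K := K) (n := n))
  refine ⟨fun _ => Msym.eq_zero_of_mem_span_of_commutatorCon, fun x y hxy => ?_, ?_⟩
  · obtain ⟨hc, hd⟩ := Prod.mk.inj hxy
    refine sub_eq_zero.1 <| Msym.eq_zero_of_mem_span_of_commutatorCon
      (Ideal.sub_mem_of_ringConGen _ ((RingCon.eq _).1 hd)) ?_
    simpa using RingCon.sub _ ((RingCon.eq _).1 hc) (RingCon.refl _ y)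
  · rw [Msym.commutatorCon_eq_ker]
    exact ⟨RingCon.quotientKerEquivOfRightInverse _ _ Msym.abelAlgHom_normalForm,
      (Msym.abelAlgHom K n).commutes⟩

/-- let `C` be the two-sided ideal of `K[M]` generated by the commutators
`a_i a_j - a_j a_i` (`i ≠ j`); as a congruence this is the ring congruence `c` generated by
`a_i a_j ∼ a_j a_i`, whose zero class `{x | c x 0}` is exactly `C`.  Let `K[Mz]` be the
`K`-linear span of `Mz` and `d` the corresponding ring congruence.  Then `K[Mz] ∩ C = 0`;
equivalently the natural ring homomorphism `K[M] → K[M]/C × K[M]/K[Mz]` is injective.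
Moreover `K[M]/C` is isomorphic as a `K`-algebra to the polynomial algebra in `n` variables. -/
theorem subdirect_product (K : Type*) [Field K] (n : ℕ) (hn : 3 ≤ n)
    (KMz : Submodule K (MonoidAlgebra K (Msym n)))
    (hKMz : KMz = Submodule.span K (MonoidAlgebra.of K (Msym n) '' {x | ∃ m, x = m * zs n}))
    (c : RingCon (MonoidAlgebra K (Msym n)))
    (hc : c = ringConGen (fun x y => ∃ i j : Fin n, i ≠ j ∧
      x = MonoidAlgebra.of K (Msym n) (mgen i) * MonoidAlgebra.of K (Msym n) (mgen j) ∧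
      y = MonoidAlgebra.of K (Msym n) (mgen j) * MonoidAlgebra.of K (Msym n) (mgen i)))
    (d : RingCon (MonoidAlgebra K (Msym n)))
    (hd : d = ringConGen (fun x y => x - y ∈ KMz)) :
    (∀ x : MonoidAlgebra K (Msym n), x ∈ KMz → c x 0 → x = 0) ∧
    Function.Injective (fun x : MonoidAlgebra K (Msym n) => (c.mk' x, d.mk' x)) ∧
    (∃ e : c.Quotient ≃+* MvPolynomial (Fin n) K,
      ∀ a : K, e (c.mk' (algebraMap K (MonoidAlgebra K (Msym n)) a)) = MvPolynomial.C a) :=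
  subdirect_product_general K n KMz hKMz c hc d hd
end
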